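/- Let α_1,…,α_r ∈ (1/N)ℤ² with coefficients m_1,…,m_r ∈ ℂ satisfying Σ m_s = 0 and Σ m_s α_s = 0 (as vectors in ℚ²). Then for each k ≥ 1 and each nonzero lattice point ℓ ∈ Z + Zτ of absolute value large relative to the α's, the inner sum Σ'_s m_s (ℓ + α_s)^{-k} is O(|ℓ|^{-k-2}); consequently the double sum Σ_{ℓ ∈ Z+Zτ} (Σ'_s m_s (ℓ + α_s)^{-k}) converges absolutely in ℓ for all k ≥ 1. -/

import Mathlib

open UpperHalfPlane

/-!
Write `α_s = (i_s + j_s τ)/N` and `z = a + bτ`. The conditions `Σ m_s = 0` and `Σ m_s α_s = 0`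
kill the first two terms of the Taylor expansion
`(z + α)^{-k} = z^{-k} - k α z^{-k-1} + O(|α|² |z|^{-k-2})`, so the inner sum is `O(|z|^{-k-2})`.
Since `|a + bτ| ≥ r(τ) max(|a|, |b|)` with `r(τ) > 0`, the lattice points tend to infinity and
`Σ |a + bτ|^{-p}` converges for `p > 2`; for `p = k + 2` this dominates the double sum.
-/

open Filter

lemma half_norm_le_norm_add {E : Type*} [SeminormedAddCommGroup E] {z a : E}
    (ha : 2 * ‖a‖ ≤ ‖z‖) : ‖z‖ / 2 ≤ ‖z + a‖ := by
  have := norm_sub_norm_le z (-a)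
  rw [sub_neg_eq_add, norm_neg] at this
  linarith

section TaylorRemainder

variable {𝕜 : Type*} [NormedField 𝕜]

lemma inv_add_pow_sub_taylor_succ (n : ℕ) {z a : 𝕜} (hz : z ≠ 0) (hza : z + a ≠ 0) :
    (z + a)⁻¹ ^ (n + 1) - z⁻¹ ^ (n + 1) + ((n + 1 : ℕ) : 𝕜) * a * z⁻¹ ^ (n + 2)
      = (z + a)⁻¹ * ((z + a)⁻¹ ^ n - z⁻¹ ^ n + n * a * z⁻¹ ^ (n + 1)
          + ((n + 1 : ℕ) : 𝕜) * a ^ 2 * z⁻¹ ^ (n + 2)) := by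
  have h : (z + a)⁻¹ - z⁻¹ = -a * ((z + a)⁻¹ * z⁻¹) := by
    field_simp
    ring
  push_cast
  linear_combination (1 - (n + 1 : 𝕜) * a * z⁻¹) * z⁻¹ ^ n * h

theorem norm_inv_add_pow_sub_taylor_le (n : ℕ) {z a : 𝕜} (hz : z ≠ 0) (ha : 2 * ‖a‖ ≤ ‖z‖) :
    ‖(z + a)⁻¹ ^ n - z⁻¹ ^ n + n * a * z⁻¹ ^ (n + 1)‖ ≤ 4 ^ n * ‖a‖ ^ 2 * ‖z‖⁻¹ ^ (n + 2) := by
  have hz_pos : 0 < ‖z‖ := norm_pos_iff.2 hz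
  have hza : ‖z‖ / 2 ≤ ‖z + a‖ := half_norm_le_norm_add ha
  have hza_ne : z + a ≠ 0 := norm_pos_iff.1 (by linarith)
  have hinv : ‖(z + a)⁻¹‖ ≤ 2 * ‖z‖⁻¹ := by
    rw [norm_inv]
    calc ‖z + a‖⁻¹ ≤ (‖z‖ / 2)⁻¹ := inv_anti₀ (by positivity) hza
      _ = 2 * ‖z‖⁻¹ := by rw [inv_div, div_eq_mul_inv]
  induction n with
  | zero => simp only [pow_zero, sub_self, Nat.cast_zero, zero_mul, add_zero, norm_zero]; positivity
  | succ n ih =>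
    have hcoeff : ‖((n + 1 : ℕ) : 𝕜)‖ ≤ ((n + 1 : ℕ) : ℝ) := by
      simpa using Nat.norm_cast_le (α := 𝕜) (n + 1)
    have h4 : 2 * ((4 : ℝ) ^ n + ((n + 1 : ℕ) : ℝ)) ≤ 4 ^ (n + 1) := by
      have : ((n + 1 : ℕ) : ℝ) ≤ 4 ^ n := by exact_mod_cast Nat.lt_pow_self (by norm_num)
      rw [pow_succ]
      linarith
    rw [inv_add_pow_sub_taylor_succ n hz hza_ne, norm_mul]
    calc ‖(z + a)⁻¹‖ * ‖(z + a)⁻¹ ^ n - z⁻¹ ^ n + n * a * z⁻¹ ^ (n + 1)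
          + ((n + 1 : ℕ) : 𝕜) * a ^ 2 * z⁻¹ ^ (n + 2)‖
        ≤ 2 * ‖z‖⁻¹ * (4 ^ n * ‖a‖ ^ 2 * ‖z‖⁻¹ ^ (n + 2)
          + ((n + 1 : ℕ) : ℝ) * ‖a‖ ^ 2 * ‖z‖⁻¹ ^ (n + 2)) := by
          gcongr
          refine (norm_add_le _ _).trans (add_le_add ih ?_)
          rw [norm_mul, norm_mul, norm_pow, norm_pow, norm_inv]
          gcongr
      _ = 2 * ((4 : ℝ) ^ n + ((n + 1 : ℕ) : ℝ)) * ‖a‖ ^ 2 * ‖z‖⁻¹ ^ (n + 1 + 2) := by ring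
      _ ≤ 4 ^ (n + 1) * ‖a‖ ^ 2 * ‖z‖⁻¹ ^ (n + 1 + 2) := by gcongr

end TaylorRemainder

section InnerSum

variable {𝕜 ι : Type*} [NormedField 𝕜] (s : Finset ι) {m α : ι → 𝕜}

theorem norm_sum_mul_add_zpow_neg_le (h0 : ∑ i ∈ s, m i = 0) (h1 : ∑ i ∈ s, m i * α i = 0)
    (k : ℕ) {z : 𝕜} (hz : z ≠ 0) (hα : ∀ i ∈ s, 2 * ‖α i‖ ≤ ‖z‖) :
    ‖∑ i ∈ s, m i * (z + α i) ^ (-(k : ℤ))‖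
      ≤ 4 ^ k * (∑ i ∈ s, ‖m i‖ * ‖α i‖ ^ 2) * ‖z‖ ^ (-(k : ℤ) - 2) := by
  have hsum : ∑ i ∈ s, m i * (z + α i) ^ (-(k : ℤ))
      = ∑ i ∈ s, m i * ((z + α i)⁻¹ ^ k - z⁻¹ ^ k + k * α i * z⁻¹ ^ (k + 1)) := by
    have expand : ∀ i, m i * ((z + α i)⁻¹ ^ k - z⁻¹ ^ k + k * α i * z⁻¹ ^ (k + 1))
        = m i * (z + α i) ^ (-(k : ℤ)) - m i * z⁻¹ ^ k + m i * α i * (k * z⁻¹ ^ (k + 1)) :=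
      fun i => by rw [zpow_neg, zpow_natCast, inv_pow]; ring
    simp only [expand, Finset.sum_add_distrib, Finset.sum_sub_distrib, ← Finset.sum_mul, h0, h1]
    ring
  have hpow : ‖z‖ ^ (-(k : ℤ) - 2) = ‖z‖⁻¹ ^ (k + 2) := by
    rw [show -(k : ℤ) - 2 = -((k + 2 : ℕ) : ℤ) by push_cast; ring, zpow_neg, zpow_natCast, inv_pow]
  rw [hsum, hpow, Finset.mul_sum, Finset.sum_mul]
  refine (norm_sum_le _ _).trans (Finset.sum_le_sum fun i hi => ?_)
  calc ‖m i * ((z + α i)⁻¹ ^ k - z⁻¹ ^ k + k * α i * z⁻¹ ^ (k + 1))‖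
      ≤ ‖m i‖ * (4 ^ k * ‖α i‖ ^ 2 * ‖z‖⁻¹ ^ (k + 2)) := by
        rw [norm_mul]
        gcongr
        exact norm_inv_add_pow_sub_taylor_le k hz (hα i hi)
    _ = 4 ^ k * (‖m i‖ * ‖α i‖ ^ 2) * ‖z‖⁻¹ ^ (k + 2) := by ring

theorem exists_norm_sum_mul_add_zpow_neg_le (h0 : ∑ i ∈ s, m i = 0)
    (h1 : ∑ i ∈ s, m i * α i = 0) (k : ℕ) :
    ∃ C R : ℝ, 0 < C ∧ 0 < R ∧ ∀ z : 𝕜, R ≤ ‖z‖ →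
      ‖∑ i ∈ s, m i * (z + α i) ^ (-(k : ℤ))‖ ≤ C * ‖z‖ ^ (-(k : ℤ) - 2) := by
  refine ⟨4 ^ k * ∑ i ∈ s, ‖m i‖ * ‖α i‖ ^ 2 + 1, 2 * ∑ i ∈ s, ‖α i‖ + 1, by positivity,
    by positivity, fun z hz => ?_⟩
  have hα : ∀ i ∈ s, 2 * ‖α i‖ ≤ ‖z‖ := fun i hi => by
    have := Finset.single_le_sum (fun j _ => norm_nonneg (α j)) hi
    linarith
  have hz0 : z ≠ 0 := norm_pos_iff.1 <| lt_of_lt_of_le (by positivity) hz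
  refine (norm_sum_mul_add_zpow_neg_le s h0 h1 k hz0 hα).trans ?_
  gcongr
  linarith

end InnerSum

section LatticeSums

variable (τ : ℍ)

lemma tendsto_norm_mul_add_cofinite :
    Tendsto (fun x : Fin 2 → ℤ => ‖(x 0 : ℂ) * τ + x 1‖) cofinite atTop := by
  have hnorm : Tendsto (fun x : Fin 2 → ℤ => EisensteinSeries.r τ * ‖x‖) cofinite atTop :=
    (tendsto_norm_comp_cofinite_atTop_of_isClosedEmbedding
      Topology.IsClosedEmbedding.id).const_mul_atTop (EisensteinSeries.r_pos τ)
  refine tendsto_atTop_mono' _ ?_ hnorm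
  filter_upwards [eventually_cofinite_ne 0] with x hx
  exact EisensteinSeries.r_mul_max_le τ hx

lemma summable_norm_mul_add_zpow {p : ℤ} (hp : p < -2) :
    Summable fun x : Fin 2 → ℤ => ‖(x 0 : ℂ) * τ + x 1‖ ^ p := by
  have hp' : (2 : ℝ) < -p := by exact_mod_cast (by omega : (2 : ℤ) < -p)
  refine ((EisensteinSeries.summable_one_div_norm_rpow hp').mul_left
    (EisensteinSeries.r τ ^ (p : ℝ))).of_nonneg_of_le (fun x => by positivity) fun x => ?_
  simpa [Real.rpow_intCast] using EisensteinSeries.summand_bound τ (by linarith : (0 : ℝ) ≤ -p) x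

/-- Identifies `(a, b)` with `![b, a]`, so that `a + b τ` becomes `x 0 * τ + x 1`. -/
def intProdEquivFinTwo : ℤ × ℤ ≃ (Fin 2 → ℤ) :=
  (Equiv.prodComm ℤ ℤ).trans (finTwoArrowEquiv ℤ).symm

lemma intProdEquivFinTwo_mul_add (ab : ℤ × ℤ) :
    ((intProdEquivFinTwo ab 0 : ℤ) : ℂ) * τ + (intProdEquivFinTwo ab 1 : ℤ)
      = (ab.1 : ℂ) + ab.2 * τ := by
  simp [intProdEquivFinTwo, add_comm]

lemma tendsto_norm_intCast_add_intCast_mul_cofinite :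
    Tendsto (fun ab : ℤ × ℤ => ‖(ab.1 : ℂ) + ab.2 * τ‖) cofinite atTop := by
  simpa [Function.comp_def, intProdEquivFinTwo_mul_add] using
    (tendsto_norm_mul_add_cofinite τ).comp intProdEquivFinTwo.injective.tendsto_cofinite

lemma summable_norm_intCast_add_intCast_mul_zpow {p : ℤ} (hp : p < -2) :
    Summable fun ab : ℤ × ℤ => ‖(ab.1 : ℂ) + ab.2 * τ‖ ^ p := by
  simpa [Function.comp_def, intProdEquivFinTwo_mul_add] using
    (intProdEquivFinTwo.summable_iff.2 (summable_norm_mul_add_zpow τ hp))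

end LatticeSums

theorem inner_sum_decay_and_summable_general
    (N : ℕ) (r : ℕ) (i j : Fin r → ℤ) (m : Fin r → ℂ)
    (h0 : ∑ s, m s = 0)
    (h1 : ∑ s, m s * ((i s : ℂ) / N) = 0)
    (h2 : ∑ s, m s * ((j s : ℂ) / N) = 0)
    (τ : ℍ) (k : ℕ) (hk : 1 ≤ k) :
    (∃ C R : ℝ, 0 < C ∧ 0 < R ∧ ∀ a b : ℤ, R ≤ ‖(a : ℂ) + (b : ℂ) * (τ : ℂ)‖ →
        ‖∑ s, m s * (((a : ℂ) + (b : ℂ) * (τ : ℂ))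
            + ((i s : ℂ) + (j s : ℂ) * (τ : ℂ)) / N) ^ (-(k : ℤ))‖
          ≤ C * ‖(a : ℂ) + (b : ℂ) * (τ : ℂ)‖ ^ (-(k : ℤ) - 2)) ∧
    Summable fun ab : ℤ × ℤ =>
      ‖∑ s, m s * (((ab.1 : ℂ) + (ab.2 : ℂ) * (τ : ℂ))
          + ((i s : ℂ) + (j s : ℂ) * (τ : ℂ)) / N) ^ (-(k : ℤ))‖ := by
  have hα : ∑ s, m s * (((i s : ℂ) + j s * τ) / N) = 0 := by
    have split : ∀ s, m s * (((i s : ℂ) + j s * τ) / N) = m s * (i s / N) + m s * (j s / N) * τ :=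
      fun s => by ring
    simp only [split, Finset.sum_add_distrib, ← Finset.sum_mul, h1, h2, zero_mul, add_zero]
  obtain ⟨C, R, hC, hR, hbound⟩ := exists_norm_sum_mul_add_zpow_neg_le Finset.univ h0 hα k
  refine ⟨⟨C, R, hC, hR, fun a b => hbound _⟩, ?_⟩
  refine ((summable_norm_intCast_add_intCast_mul_zpow τ (p := -(k : ℤ) - 2) (by omega)).mul_left
    C).of_norm_bounded_eventually ?_
  filter_upwards [(tendsto_norm_intCast_add_intCast_mul_cofinite τ).eventually_ge_atTop R]
    with ab hab
  rw [norm_norm]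
  exact hbound _ hab

/-- Let `α_s = (i_s/N, j_s/N)` with coefficients `m_s ∈ ℂ` satisfying `Σ m_s = 0` and
`Σ m_s α_s = 0`.  Then the inner sum `Σ'_s m_s (ℓ + α_s)^{-k}` is `O(|ℓ|^{-k-2})` for
lattice points `ℓ = a + bτ` of large absolute value, and consequently the double sum
`Σ_ℓ (Σ'_s m_s (ℓ + α_s)^{-k})` converges absolutely in `ℓ`, for every `k ≥ 1`.
(Terms with `ℓ + α_s = 0` are omitted; this is automatic since `(0:ℂ)^(-k) = 0`.) -/
theorem inner_sum_decay_and_summable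
    (N : ℕ) (hN : 1 ≤ N) (r : ℕ) (i j : Fin r → ℤ) (m : Fin r → ℂ)
    (h0 : ∑ s, m s = 0)
    (h1 : ∑ s, m s * ((i s : ℂ) / N) = 0)
    (h2 : ∑ s, m s * ((j s : ℂ) / N) = 0)
    (τ : ℍ) (k : ℕ) (hk : 1 ≤ k) :
    (∃ C R : ℝ, 0 < C ∧ 0 < R ∧ ∀ a b : ℤ, R ≤ ‖(a : ℂ) + (b : ℂ) * (τ : ℂ)‖ →
        ‖∑ s, m s * (((a : ℂ) + (b : ℂ) * (τ : ℂ))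
            + ((i s : ℂ) + (j s : ℂ) * (τ : ℂ)) / N) ^ (-(k : ℤ))‖
          ≤ C * ‖(a : ℂ) + (b : ℂ) * (τ : ℂ)‖ ^ (-(k : ℤ) - 2)) ∧
    Summable fun ab : ℤ × ℤ =>
      ‖∑ s, m s * (((ab.1 : ℂ) + (ab.2 : ℂ) * (τ : ℂ))
          + ((i s : ℂ) + (j s : ℂ) * (τ : ℂ)) / N) ^ (-(k : ℤ))‖ :=
  inner_sum_decay_and_summable_general N r i j m h0 h1 h2 τ k hk
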